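/- Let K be a regular incidence complex of rank n with flag-transitive automorphism subgroup Λ and base flag Φ, and let R_i and R_{-1} = Λ_Φ be the distinguished subgroups. Then the number of flags of K that are i-adjacent to Φ equals the index |R_i : R_{-1}| minus 1. -/

import Mathlib

/-!
The group `R_i` acts on flags by images. Order automorphisms preserve ranks, because the rank of
a face is one less than the number of faces below it in any flag through it. Hence an element of
`R_i`, which fixes every face of `Φ` except possibly its `i`-face, either fixes `Φ` or moves it to
an `i`-adjacent flag; conversely, flag-transitivity carries `Φ` to any `i`-adjacent flag by an
element that necessarily lies in `R_i`. So the orbit of `Φ` under `R_i` is `Φ` together with its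
`i`-adjacent flags, the stabilizer of `Φ` in `R_i` is `R_{-1}`, and orbit–stabilizer gives the
count.
-/

universe u

variable {α : Type u}

/-- A ranked partial order `(α, ≤)` with rank function `rk` is an incidence complex of
rank `n`: ranks run from `-1` to `n` and are strictly monotone, there are unique minimal
and maximal faces, every flag (maximal chain) contains a face of each rank `-1,…,n` (hence
has exactly `n+2` faces), the complex is strongly flag-connected, and between any two
incident faces of ranks `j-1` and `j+1` there are at least two faces of rank `j`. -/
structure IsIncidenceComplex (n : ℕ) [PartialOrder α] (rk : α → ℤ) : Prop where
  rk_strictMono : ∀ {F G : α}, F < G → rk F < rk G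
  rk_range : ∀ F : α, -1 ≤ rk F ∧ rk F ≤ n
  exists_bot : ∃ B : α, rk B = -1 ∧ ∀ F : α, B ≤ F
  exists_top : ∃ T : α, rk T = n ∧ ∀ F : α, F ≤ T
  flag_rk : ∀ Φ : Set α, IsMaxChain (· ≤ ·) Φ → ∀ j : ℤ, -1 ≤ j → j ≤ n →
    ∃ F ∈ Φ, rk F = j
  strongly_connected : ∀ Φ Ψ : Set α, IsMaxChain (· ≤ ·) Φ → IsMaxChain (· ≤ ·) Ψ →
    Relation.ReflTransGen
      (fun A B => IsMaxChain (· ≤ ·) A ∧ IsMaxChain (· ≤ ·) B ∧ Φ ∩ Ψ ⊆ A ∧ Φ ∩ Ψ ⊆ B ∧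
        ∃ F G, F ∈ A ∧ G ∈ B ∧ F ≠ G ∧ A \ {F} = B \ {G}) Φ Ψ
  diamond_ge_two : ∀ F G : α, F < G → rk G = rk F + 2 →
    ∃ H₁ H₂ : α, H₁ ≠ H₂ ∧ F < H₁ ∧ H₁ < G ∧ F < H₂ ∧ H₂ < G

/-- Two flags are `i`-adjacent when they differ in exactly one face, of rank `i`. -/
def IAdjacent [PartialOrder α] (rk : α → ℤ) (i : ℤ) (Φ Ψ : Set α) : Prop :=
  ∃ F G, F ∈ Φ ∧ G ∈ Ψ ∧ F ≠ G ∧ rk F = i ∧ rk G = i ∧ Φ \ {F} = Ψ \ {G}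

/-- The group of order automorphisms of `α`, as a subgroup of the permutations of `α`. -/
def orderAutGroup (α : Type u) [PartialOrder α] : Subgroup (Equiv.Perm α) where
  carrier := {φ | ∀ a b : α, φ a ≤ φ b ↔ a ≤ b}
  one_mem' := fun _ _ => Iff.rfl
  mul_mem' := by
    intro f g hf hg a b
    rw [Equiv.Perm.mul_apply, Equiv.Perm.mul_apply]
    exact (hf (g a) (g b)).trans (hg a b)
  inv_mem' := by
    intro f hf a b
    conv_rhs => rw [← (show f (f⁻¹ a) = a from f.apply_symm_apply a),
      ← (show f (f⁻¹ b) = b from f.apply_symm_apply b)]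
    exact (hf _ _).symm

/-- `Λ` is a flag-transitive group of automorphisms. -/
def FlagTransitive [PartialOrder α] (Λ : Subgroup (Equiv.Perm α)) : Prop :=
  ∀ Φ Ψ : Set α, IsMaxChain (· ≤ ·) Φ → IsMaxChain (· ≤ ·) Ψ → ∃ γ ∈ Λ, γ '' Φ = Ψ

/-- The elementwise stabilizer in `Λ` of a set `Ω` of faces. -/
def stabOf [PartialOrder α] (Λ : Subgroup (Equiv.Perm α)) (Ω : Set α) :
    Subgroup (Equiv.Perm α) where
  carrier := {γ | γ ∈ Λ ∧ ∀ x ∈ Ω, γ x = x}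
  one_mem' := ⟨Λ.one_mem, fun _ _ => rfl⟩
  mul_mem' := by
    intro f g hf hg
    refine ⟨Λ.mul_mem hf.1 hg.1, fun x hx => ?_⟩
    rw [Equiv.Perm.mul_apply, hg.2 x hx, hf.2 x hx]
  inv_mem' := by
    intro f hf
    refine ⟨Λ.inv_mem hf.1, fun x hx => ?_⟩
    simpa using (congrArg (⇑f⁻¹) (hf.2 x hx)).symm

/-- The distinguished subgroup `R_i` of `Λ` relative to a base flag enumerated by
`F : Fin n → α`: the elements of `Λ` fixing every base face `F j` with `j ≠ i`.  For
`i ∉ {0,…,n-1}` (e.g. `i = -1` or `i = n`) this is the stabilizer of the base flag. -/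
def distinguishedSubgroup [PartialOrder α] {n : ℕ} (Λ : Subgroup (Equiv.Perm α))
    (F : Fin n → α) (i : ℤ) : Subgroup (Equiv.Perm α) :=
  stabOf Λ {x | ∃ j : Fin n, (j : ℤ) ≠ i ∧ x = F j}

open Pointwise

def orderAutGroup.toOrderIso [PartialOrder α] {γ : Equiv.Perm α} (hγ : γ ∈ orderAutGroup α) :
    α ≃o α where
  toEquiv := γ
  map_rel_iff' := hγ _ _

theorem mem_distinguishedSubgroup [PartialOrder α] {n : ℕ} {Λ : Subgroup (Equiv.Perm α)}
    {F : Fin n → α} {c : ℤ} {γ : Equiv.Perm α} :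
    γ ∈ distinguishedSubgroup Λ F c ↔ γ ∈ Λ ∧ ∀ j : Fin n, (j : ℤ) ≠ c → γ (F j) = F j :=
  and_congr_right fun _ =>
    ⟨fun hfix j hj => hfix _ ⟨j, hj, rfl⟩, fun hfix _ ⟨j, hj, hx⟩ => hx ▸ hfix j hj⟩

namespace IsIncidenceComplex

variable [PartialOrder α] {n : ℕ} {rk : α → ℤ}

theorem eq_of_rk_eq (h : IsIncidenceComplex n rk) {s : Set α} (hs : IsChain (· ≤ ·) s)
    {x y : α} (hx : x ∈ s) (hy : y ∈ s) (hxy : rk x = rk y) : x = y := by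
  by_contra hne
  rcases hs.total hx hy with hle | hle
  · exact (h.rk_strictMono (hle.lt_of_ne hne)).ne hxy
  · exact (h.rk_strictMono (hle.lt_of_ne (Ne.symm hne))).ne' hxy

theorem lt_iff_rk_lt (h : IsIncidenceComplex n rk) {s : Set α} (hs : IsChain (· ≤ ·) s)
    {x y : α} (hx : x ∈ s) (hy : y ∈ s) : x < y ↔ rk x < rk y := by
  refine ⟨h.rk_strictMono, fun hxy => ?_⟩
  rcases hs.total hx hy with hle | hle
  · exact hle.lt_of_ne fun he => hxy.ne (congrArg rk he)
  · rcases hle.eq_or_lt with he | hlt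
    · exact absurd (congrArg rk he) hxy.ne'
    · exact absurd (h.rk_strictMono hlt) hxy.not_gt

theorem not_iAdjacent_self (h : IsIncidenceComplex n rk) {Φ : Set α}
    (hΦ : IsChain (· ≤ ·) Φ) (c : ℤ) : ¬ IAdjacent rk c Φ Φ := by
  rintro ⟨G, G', hG, hG', hne, hGc, hG'c, -⟩
  exact hne (h.eq_of_rk_eq hΦ hG hG' (hGc.trans hG'c.symm))

theorem rk_add_one_eq_ncard (h : IsIncidenceComplex n rk) {Ψ : Set α}
    (hΨ : IsMaxChain (· ≤ ·) Ψ) {x : α} (hx : x ∈ Ψ) :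
    rk x + 1 = ((Ψ ∩ Set.Iio x).ncard : ℤ) := by
  have hinj : Set.InjOn rk (Ψ ∩ Set.Iio x) := fun y hy z hz => h.eq_of_rk_eq hΨ.1 hy.1 hz.1
  have himage : rk '' (Ψ ∩ Set.Iio x) = Set.Ico (-1) (rk x) := by
    ext j
    constructor
    · rintro ⟨y, ⟨-, hyx⟩, rfl⟩
      exact ⟨(h.rk_range y).1, h.rk_strictMono hyx⟩
    · rintro ⟨hj, hjx⟩
      obtain ⟨y, hy, rfl⟩ := h.flag_rk Ψ hΨ j hj (hjx.le.trans (h.rk_range x).2)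
      exact ⟨y, ⟨hy, (h.lt_iff_rk_lt hΨ.1 hy hx).2 hjx⟩, rfl⟩
  rw [← hinj.ncard_image, himage, Set.ncard_eq_toFinset_card', Set.toFinset_Ico, Int.card_Ico]
  have := (h.rk_range x).1
  omega

theorem rk_apply (h : IsIncidenceComplex n rk) (e : α ≃o α) (x : α) : rk (e x) = rk x := by
  obtain ⟨Ψ, hΨ, hxΨ⟩ := (IsChain.singleton (r := (· ≤ ·)) (a := x)).exists_maxChain
  have hrk := h.rk_add_one_eq_ncard (hΨ.image e) (Set.mem_image_of_mem e (hxΨ rfl))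
  rw [← e.image_Iio, ← Set.image_inter e.injective, Set.ncard_image_of_injective _ e.injective,
    ← h.rk_add_one_eq_ncard hΨ (hxΨ rfl)] at hrk
  omega

theorem isBot_of_rk_eq (h : IsIncidenceComplex n rk) {x : α} (hx : rk x = -1) : IsBot x := by
  obtain ⟨B, hB, hBle⟩ := h.exists_bot
  rcases (hBle x).eq_or_lt with rfl | hlt
  · exact hBle
  · exact absurd (h.rk_strictMono hlt) (by omega)

theorem isTop_of_rk_eq (h : IsIncidenceComplex n rk) {x : α} (hx : rk x = n) : IsTop x := by
  obtain ⟨T, hT, hTle⟩ := h.exists_top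
  rcases (hTle x).eq_or_lt with rfl | hlt
  · exact hTle
  · exact absurd (h.rk_strictMono hlt) (by omega)

/-- A face of the flag `Φ` other than the `F j` has rank `-1` or `n`, so it is the least or the
greatest face, and every order automorphism fixes it. -/
theorem apply_eq_self_of_mem (h : IsIncidenceComplex n rk) {Φ : Set α}
    (hΦ : IsChain (· ≤ ·) Φ) {F : Fin n → α} (hF : ∀ j : Fin n, F j ∈ Φ ∧ rk (F j) = (j : ℤ))
    (e : α ≃o α) {x : α} (hx : x ∈ Φ) (hxF : ∀ j : Fin n, x = F j → e x = x) : e x = x := by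
  obtain ⟨hlo, hhi⟩ := h.rk_range x
  rcases hlo.eq_or_lt with hbot | hlo
  · have hx := h.isBot_of_rk_eq hbot.symm
    exact le_antisymm (e.le_symm_apply.1 (hx _)) (hx _)
  rcases hhi.eq_or_lt with htop | hhi
  · have hx := h.isTop_of_rk_eq htop
    exact le_antisymm (hx _) (e.symm_apply_le.1 (hx _))
  set j : Fin n := ⟨(rk x).toNat, by omega⟩
  exact hxF j (h.eq_of_rk_eq hΦ hx (hF j).1 (by rw [(hF j).2]; simp only [j]; omega))

variable {Λ : Subgroup (Equiv.Perm α)} {Φ : Set α} {F : Fin n → α}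

theorem image_eq_self_iff_mem (h : IsIncidenceComplex n rk) (hΛ : Λ ≤ orderAutGroup α)
    (hΦ : IsMaxChain (· ≤ ·) Φ) (hF : ∀ j : Fin n, F j ∈ Φ ∧ rk (F j) = (j : ℤ))
    {γ : Equiv.Perm α} (hγ : γ ∈ Λ) : ⇑γ '' Φ = Φ ↔ γ ∈ distinguishedSubgroup Λ F (-1) := by
  rw [mem_distinguishedSubgroup]
  constructor
  · intro hγΦ
    refine ⟨hγ, fun j _ => ?_⟩
    have hγF : γ (F j) ∈ Φ := hγΦ ▸ Set.mem_image_of_mem γ (hF j).1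
    exact h.eq_of_rk_eq hΦ.1 hγF (hF j).1 (h.rk_apply (orderAutGroup.toOrderIso (hΛ hγ)) (F j))
  · rintro ⟨-, hfix⟩
    refine Set.EqOn.image_eq_self fun x hx =>
      h.apply_eq_self_of_mem hΦ.1 hF (orderAutGroup.toOrderIso (hΛ hγ)) hx fun j hj => ?_
    rw [hj]
    exact hfix j (by omega)

theorem image_eq_self_or_iAdjacent (h : IsIncidenceComplex n rk) (hΛ : Λ ≤ orderAutGroup α)
    (hΦ : IsMaxChain (· ≤ ·) Φ) (hF : ∀ j : Fin n, F j ∈ Φ ∧ rk (F j) = (j : ℤ))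
    {i : Fin n} {γ : Equiv.Perm α} (hγ : γ ∈ distinguishedSubgroup Λ F i) :
    ⇑γ '' Φ = Φ ∨ IAdjacent rk i Φ (⇑γ '' Φ) := by
  obtain ⟨hγΛ, hfix⟩ := mem_distinguishedSubgroup.1 hγ
  have hfix' : ∀ j : Fin n, F j ≠ F i → γ (F j) = F j := fun j hj =>
    hfix j fun hji => hj (by rw [Fin.ext (by exact_mod_cast hji : (j : ℕ) = i)])
  by_cases hi : γ (F i) = F i
  · refine .inl ((h.image_eq_self_iff_mem hΛ hΦ hF hγΛ).2 ?_)
    refine mem_distinguishedSubgroup.2 ⟨hγΛ, fun j _ => ?_⟩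
    by_cases hj : F j = F i
    · rwa [hj]
    · exact hfix' j hj
  · have hγΦ : ⇑γ '' (Φ \ {F i}) = Φ \ {F i} := Set.EqOn.image_eq_self fun x hx =>
      h.apply_eq_self_of_mem hΦ.1 hF (orderAutGroup.toOrderIso (hΛ hγΛ)) hx.1 fun j hj => by
        rw [hj]
        exact hfix' j (hj ▸ hx.2)
    refine .inr ⟨F i, γ (F i), (hF i).1, Set.mem_image_of_mem γ (hF i).1, Ne.symm hi, (hF i).2,
      (h.rk_apply (orderAutGroup.toOrderIso (hΛ hγΛ)) (F i)).trans (hF i).2, ?_⟩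
    rw [← hγΦ, Set.image_sdiff γ.injective, Set.image_singleton]

theorem exists_mem_image_eq_of_iAdjacent (h : IsIncidenceComplex n rk)
    (hΛ : Λ ≤ orderAutGroup α) (htrans : FlagTransitive Λ) (hΦ : IsMaxChain (· ≤ ·) Φ)
    (hF : ∀ j : Fin n, F j ∈ Φ ∧ rk (F j) = (j : ℤ)) {i : Fin n} {Ψ : Set α}
    (hΨ : IsMaxChain (· ≤ ·) Ψ) (hadj : IAdjacent rk i Φ Ψ) :
    ∃ γ ∈ distinguishedSubgroup Λ F i, ⇑γ '' Φ = Ψ := by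
  obtain ⟨G, G', -, -, -, hG, -, hΦΨ⟩ := hadj
  obtain ⟨γ, hγ, rfl⟩ := htrans Φ Ψ hΦ hΨ
  refine ⟨γ, mem_distinguishedSubgroup.2 ⟨hγ, fun j hj => ?_⟩, rfl⟩
  have hFj : F j ∈ Φ \ {G} := ⟨(hF j).1, fun hjG => hj (by rw [← (hF j).2, hjG, hG])⟩
  rw [hΦΨ] at hFj
  exact h.eq_of_rk_eq hΨ.1 (Set.mem_image_of_mem γ (hF j).1) hFj.1
    (h.rk_apply (orderAutGroup.toOrderIso (hΛ hγ)) (F j))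

theorem orbit_distinguishedSubgroup (h : IsIncidenceComplex n rk) (hΛ : Λ ≤ orderAutGroup α)
    (htrans : FlagTransitive Λ) (hΦ : IsMaxChain (· ≤ ·) Φ)
    (hF : ∀ j : Fin n, F j ∈ Φ ∧ rk (F j) = (j : ℤ)) (i : Fin n) :
    MulAction.orbit (distinguishedSubgroup Λ F i) Φ =
      insert Φ {Ψ | IsMaxChain (· ≤ ·) Ψ ∧ IAdjacent rk i Φ Ψ} := by
  ext Ψ
  constructor
  · rintro ⟨⟨γ, hγ⟩, rfl⟩
    have hγΛ := (mem_distinguishedSubgroup.1 hγ).1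
    change ⇑γ '' Φ ∈ _
    exact (h.image_eq_self_or_iAdjacent hΛ hΦ hF hγ).imp id
      fun hadj => ⟨hΦ.image (orderAutGroup.toOrderIso (hΛ hγΛ)), hadj⟩
  · rintro (rfl | ⟨hΨ, hadj⟩)
    · exact MulAction.mem_orbit_self Ψ
    · obtain ⟨γ, hγ, rfl⟩ := h.exists_mem_image_eq_of_iAdjacent hΛ htrans hΦ hF hΨ hadj
      exact ⟨⟨γ, hγ⟩, rfl⟩

theorem stabilizer_distinguishedSubgroup (h : IsIncidenceComplex n rk)
    (hΛ : Λ ≤ orderAutGroup α) (hΦ : IsMaxChain (· ≤ ·) Φ)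
    (hF : ∀ j : Fin n, F j ∈ Φ ∧ rk (F j) = (j : ℤ)) (i : Fin n) :
    MulAction.stabilizer (distinguishedSubgroup Λ F i) Φ =
      (distinguishedSubgroup Λ F (-1)).subgroupOf (distinguishedSubgroup Λ F i) := by
  ext γ
  rw [MulAction.mem_stabilizer_iff, Subgroup.mem_subgroupOf]
  exact h.image_eq_self_iff_mem hΛ hΦ hF (mem_distinguishedSubgroup.1 γ.2).1

end IsIncidenceComplex

/-- For a regular incidence complex with flag-transitive automorphism group
`Λ`, base flag `Φ` and distinguished subgroups `R i` and `R (-1) = Λ_Φ`, the number of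
flags that are `i`-adjacent to `Φ` equals the index `|R i : R (-1)|` minus 1. -/
theorem card_i_adjacent_flags_eq_index_sub_one
    {α : Type u} [PartialOrder α] {n : ℕ} (rk : α → ℤ)
    (h : IsIncidenceComplex n rk)
    (Λ : Subgroup (Equiv.Perm α)) (hΛ : Λ ≤ orderAutGroup α)
    (htrans : FlagTransitive Λ)
    (Φ : Set α) (hΦ : IsMaxChain (· ≤ ·) Φ)
    (F : Fin n → α) (hF : ∀ i : Fin n, F i ∈ Φ ∧ rk (F i) = (i : ℤ))
    (i : Fin n) :
    Nat.card {Ψ : Set α // IsMaxChain (· ≤ ·) Ψ ∧ IAdjacent rk (i : ℤ) Φ Ψ}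
      = (distinguishedSubgroup Λ F (-1)).relIndex
          (distinguishedSubgroup Λ F (i : ℤ)) - 1 := by
  set Ri := distinguishedSubgroup Λ F i
  have hadj : {Ψ | IsMaxChain (· ≤ ·) Ψ ∧ IAdjacent rk i Φ Ψ} = MulAction.orbit Ri Φ \ {Φ} := by
    rw [h.orbit_distinguishedSubgroup hΛ htrans hΦ hF i,
      Set.insert_sdiff_self_of_notMem fun hΦΦ => h.not_iAdjacent_self hΦ.1 i hΦΦ.2]
  calc Nat.card {Ψ : Set α // IsMaxChain (· ≤ ·) Ψ ∧ IAdjacent rk i Φ Ψ}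
      = (MulAction.orbit Ri Φ \ {Φ}).ncard := by rw [← hadj]; exact Nat.card_coe_set_eq _
    _ = (MulAction.orbit Ri Φ).ncard - 1 :=
      Set.ncard_sdiff_singleton_of_mem (MulAction.mem_orbit_self Φ)
    _ = (MulAction.stabilizer Ri Φ).index - 1 := by rw [MulAction.index_stabilizer]
    _ = (distinguishedSubgroup Λ F (-1)).relIndex Ri - 1 := by
      rw [h.stabilizer_distinguishedSubgroup hΛ hΦ hF i]
      rfl
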